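/- arXiv:2205.15876 — 8 statements merged into one kernel-verified Lean document; each statement's English description precedes it below -/
import Mathlib

section
/- For every real V ≠ -1 and every choice of the parameters, the identity F(V, ±(1+V)) = ∓((γ-1)/2)·G(V, ±(1+V)) holds (with matching sign choices); i.e. on the two critical lines C = ±(1+V) the function F equals ∓(γ-1)/2 times G. -/
noncomputable section

/-- `V_* = (κ - 2(λ-1))/(nγ)` -/
def Vstar (n γ lam κ : ℝ) : ℝ := (κ - 2*(lam - 1)) / (n*γ)

/-- `α = (κ(γ-1) + 2(λ-1))/(2γ)` -/
def alphaP (γ lam κ : ℝ) : ℝ := (κ*(γ - 1) + 2*(lam - 1)) / (2*γ)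

/-- `k₁ = 1 + (n-1)(γ-1)/2` -/
def K1 (n γ : ℝ) : ℝ := 1 + (n - 1)*(γ - 1)/2

/-- `k₂ = ((n-1)(γ-1) + (γ-3)(λ-1))/2` -/
def K2 (n γ lam : ℝ) : ℝ := ((n - 1)*(γ - 1) + (γ - 3)*(lam - 1)) / 2

/-- `k₃ = (γ-1)(λ-1)/2` -/
def K3 (γ lam : ℝ) : ℝ := (γ - 1)*(lam - 1)/2

/-- `G(V,C) = nC²(V - V_*) - V(1+V)(λ+V)` -/
def Gf (n γ lam κ V C : ℝ) : ℝ := n*C^2*(V - Vstar n γ lam κ) - V*(1+V)*(lam+V)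

/-- `F(V,C) = C[C²(1 + α/(1+V)) - k₁(1+V)² + k₂(1+V) - k₃]` -/
def Ff (n γ lam κ V C : ℝ) : ℝ :=
  C*(C^2*(1 + alphaP γ lam κ/(1+V)) - K1 n γ*(1+V)^2 + K2 n γ lam*(1+V) - K3 γ lam)

/-- on the critical lines `C = ±(1+V)` one has
`F(V, ±(1+V)) = ∓((γ-1)/2) · G(V, ±(1+V))`. -/
theorem stmt_0 (n γ lam κ V : ℝ) (hn : n = 2 ∨ n = 3) (hγ : 1 < γ) (hV : V ≠ -1) :
    Ff n γ lam κ V (1+V) = -((γ-1)/2) * Gf n γ lam κ V (1+V) ∧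
    Ff n γ lam κ V (-(1+V)) = ((γ-1)/2) * Gf n γ lam κ V (-(1+V)) := by
  have hγ0 : γ ≠ 0 := by linarith
  have h1V : (1:ℝ)+V ≠ 0 := by intro h; apply hV; linarith
  have hn0 : n ≠ 0 := by rcases hn with h|h <;> rw [h] <;> norm_num
  constructor <;>
  · simp only [Ff, Gf, Vstar, alphaP, K1, K2, K3]
    field_simp
    ring
end
end

section
/- Suppose V ≠ -1, V ≠ V_*, C ≠ 0, and C² = V(1+V)(λ+V)/(n(V-V_*)) (i.e. G(V,C) = 0 with C ≠ 0). Then F(V,C) = 0 if and only if W := 1+V satisfies the cubic equation [nk₁-1]W³ - [nk₂ - βk₁ + α + (λ-2)]W² + [nk₃ - βk₂ - (λ-2)α + (λ-1)]W + [βk₃ + (λ-1)α] = 0, where β = -n(1+V_*). -/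
noncomputable section

/-- The cubic in `W = 1+V` obtained by substituting `C² = V(1+V)(λ+V)/(n(V-V_*))`
into `F(V,C) = 0`; here `β = -n(1+V_*)`. -/
def cubicP (n γ lam κ W : ℝ) : ℝ :=
  (n*K1 n γ - 1)*W^3
    - (n*K2 n γ lam - (-n*(1 + Vstar n γ lam κ))*K1 n γ + alphaP γ lam κ + (lam - 2))*W^2
    + (n*K3 γ lam - (-n*(1 + Vstar n γ lam κ))*K2 n γ lam - (lam - 2)*alphaP γ lam κ + (lam - 1))*W
    + ((-n*(1 + Vstar n γ lam κ))*K3 γ lam + (lam - 1)*alphaP γ lam κ)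

/-- if `G(V,C) = 0` with `C ≠ 0` (i.e. `C² = V(1+V)(λ+V)/(n(V-V_*))`),
then `F(V,C) = 0` iff `W = 1+V` is a root of the cubic. -/
theorem stmt_1 (n γ lam κ V C : ℝ) (hn : n = 2 ∨ n = 3) (hγ : 1 < γ)
    (hV1 : V ≠ -1) (hV2 : V ≠ Vstar n γ lam κ) (hC : C ≠ 0)
    (hG : C^2 = V*(1+V)*(lam+V) / (n*(V - Vstar n γ lam κ))) :
    Ff n γ lam κ V C = 0 ↔ cubicP n γ lam κ (1+V) = 0 := by
  have hn0 : n ≠ 0 := by rcases hn with h | h <;> simp [h]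
  have hW : (1:ℝ) + V ≠ 0 := fun h => hV1 (by linarith)
  have hD : V - Vstar n γ lam κ ≠ 0 := sub_ne_zero.mpr hV2
  have hM : n * (V - Vstar n γ lam κ) ≠ 0 := mul_ne_zero hn0 hD
  have key : cubicP n γ lam κ (1+V) =
      -((C^2*(1 + alphaP γ lam κ/(1+V)) - K1 n γ*(1+V)^2 + K2 n γ lam*(1+V) - K3 γ lam)
        * (n*(V - Vstar n γ lam κ))) := by
    rw [hG]
    set s := Vstar n γ lam κ with hs
    set a := alphaP γ lam κ
    set p := K1 n γ
    set q := K2 n γ lam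
    set r := K3 γ lam
    unfold cubicP
    rw [← hs]
    field_simp
    ring
  unfold Ff
  rw [mul_eq_zero, key, neg_eq_zero, mul_eq_zero]
  tauto
end
end

section
/- The number W₄ = 1 + V₄, where V₄ = -λ/(1 + (n/2)(γ-1)), is a real root of the cubic [nk₁-1]W³ - [nk₂ - βk₁ + α + (λ-2)]W² + [nk₃ - βk₂ - (λ-2)α + (λ-1)]W + [βk₃ + (λ-1)α] = 0, where β = -n(1+V_*); this holds for all values of the parameters n ∈ {2,3}, γ > 1, λ, κ. -/
noncomputable section

/-!
Writing `V = W - 1` and `d = 1 + (n/2)(γ-1)`, the cubic is `n(V - V_*)·K(W) - (W + α)·V(V + λ)`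
with `K(W) = k₁W² - k₂W + k₃`. Two identities make it factor: `K(W) = (dV + λ)W - ((γ-1)/2)·V(V + λ)`,
and `α - ((γ-1)/2)·nV_* = λ - 1`, in which `κ` cancels. Together they give
`cubic(W) = (dV + λ)·(n(V - V_*)W - V(V + λ))`, and `W₄ = 1 - λ/d` kills the linear factor.
-/

theorem cubicP_eq (n γ lam κ W : ℝ) :
    cubicP n γ lam κ W =
      n * (W - 1 - Vstar n γ lam κ) * (K1 n γ * W ^ 2 - K2 n γ lam * W + K3 γ lam)
        - (W + alphaP γ lam κ) * (W - 1) * (W - 1 + lam) := by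
  unfold cubicP
  ring

theorem K1_mul_sq_sub_K2_mul_add_K3 (n γ lam W : ℝ) :
    K1 n γ * W ^ 2 - K2 n γ lam * W + K3 γ lam =
      ((1 + n / 2 * (γ - 1)) * (W - 1) + lam) * W - (γ - 1) / 2 * ((W - 1) * (W - 1 + lam)) := by
  unfold K1 K2 K3
  ring

theorem alphaP_sub_mul_Vstar {n γ : ℝ} (hn : n ≠ 0) (hγ : γ ≠ 0) (lam κ : ℝ) :
    alphaP γ lam κ - (γ - 1) / 2 * (n * Vstar n γ lam κ) = lam - 1 := by
  unfold alphaP Vstar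
  field_simp
  ring

theorem cubicP_eq_mul {n γ : ℝ} (hn : n ≠ 0) (hγ : γ ≠ 0) (lam κ W : ℝ) :
    cubicP n γ lam κ W =
      ((1 + n / 2 * (γ - 1)) * (W - 1) + lam)
        * (n * (W - 1 - Vstar n γ lam κ) * W - (W - 1) * (W - 1 + lam)) := by
  rw [cubicP_eq, K1_mul_sq_sub_K2_mul_add_K3]
  linear_combination (-((W - 1) * (W - 1 + lam))) * alphaP_sub_mul_Vstar hn hγ lam κ

/-- `W₄ = 1 + V₄`, with `V₄ = -λ/(1 + (n/2)(γ-1))`, is always a root of the cubic. -/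
theorem stmt_2 (n γ lam κ : ℝ) (hn : n = 2 ∨ n = 3) (hγ : 1 < γ) :
    cubicP n γ lam κ (1 + (-lam/(1 + (n/2)*(γ - 1)))) = 0 := by
  have hn_pos : 0 < n := by rcases hn with rfl | rfl <;> norm_num
  have hd : 1 + n / 2 * (γ - 1) ≠ 0 := by
    have hγ1 : 0 < γ - 1 := sub_pos.2 hγ
    positivity
  rw [cubicP_eq_mul hn_pos.ne' (by linarith)]
  apply mul_eq_zero_of_left
  rw [add_sub_cancel_left, mul_div_cancel₀ _ hd, neg_add_cancel]
end
end

section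
/- Assume Δ ≥ 0. Then the two numbers W_± = 1 + V_± are roots of the cubic [nk₁-1]W³ - [nk₂ - βk₁ + α + (λ-2)]W² + [nk₃ - βk₂ - (λ-2)α + (λ-1)]W + [βk₃ + (λ-1)α] = 0, where β = -n(1+V_*). -/
noncomputable section

/-- The discriminant `Δ = (γ-2)²μ² - 2[γm(γ+2) - κ(γ-2)]μ + (γm+κ)²`, with `m = n-1`, `μ = λ-1`. -/
def DeltaP (n γ lam κ : ℝ) : ℝ :=
  (γ - 2)^2*(lam - 1)^2 - 2*(γ*(n-1)*(γ+2) - κ*(γ-2))*(lam - 1) + (γ*(n-1) + κ)^2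

/-- `V₊ = (1/(2mγ))[(γ-2)μ + κ - mγ + √Δ]` -/
def Vplus (n γ lam κ : ℝ) : ℝ :=
  (1/(2*(n-1)*γ)) * ((γ-2)*(lam-1) + κ - (n-1)*γ + Real.sqrt (DeltaP n γ lam κ))

/-- `V₋ = (1/(2mγ))[(γ-2)μ + κ - mγ - √Δ]` -/
def Vminus (n γ lam κ : ℝ) : ℝ :=
  (1/(2*(n-1)*γ)) * ((γ-2)*(lam-1) + κ - (n-1)*γ - Real.sqrt (DeltaP n γ lam κ))

/-- if `Δ ≥ 0` then `W_± = 1 + V_±` are roots of the cubic. -/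
theorem stmt_3 (n γ lam κ : ℝ) (hn : n = 2 ∨ n = 3) (hγ : 1 < γ)
    (hΔ : 0 ≤ DeltaP n γ lam κ) :
    cubicP n γ lam κ (1 + Vplus n γ lam κ) = 0 ∧
    cubicP n γ lam κ (1 + Vminus n γ lam κ) = 0 := by
  have hg : γ ≠ 0 := by linarith
  have hn0 : n ≠ 0 := by rcases hn with h | h <;> rw [h] <;> norm_num
  have hm : n - 1 ≠ 0 := by rcases hn with h | h <;> rw [h] <;> norm_num
  have hs : Real.sqrt (DeltaP n γ lam κ) ^ 2
      = (γ - 2)^2*(lam - 1)^2 - 2*(γ*(n-1)*(γ+2) - κ*(γ-2))*(lam - 1) + (γ*(n-1) + κ)^2 := by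
    rw [Real.sq_sqrt hΔ]; rfl
  have key : ∀ V : ℝ,
      (n-1)*γ*V^2 - ((γ-2)*(lam-1) + κ - (n-1)*γ)*V + (2*(lam-1) - κ) = 0 →
      cubicP n γ lam κ (1 + V) = 0 := by
    intro V hQ
    have h2 : cubicP n γ lam κ (1 + V) =
        (2*lam + (n*γ - n + 2)*V) *
          ((n-1)*γ*V^2 - ((γ-2)*(lam-1) + κ - (n-1)*γ)*V + (2*(lam-1) - κ)) / (2*γ) := by
      unfold cubicP Vstar alphaP K1 K2 K3
      field_simp
      ring
    rw [h2, hQ, mul_zero, zero_div]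
  have quad : ∀ V : ℝ,
      2*(n-1)*γ*V = (γ-2)*(lam-1) + κ - (n-1)*γ + Real.sqrt (DeltaP n γ lam κ) ∨
      2*(n-1)*γ*V = (γ-2)*(lam-1) + κ - (n-1)*γ - Real.sqrt (DeltaP n γ lam κ) →
      (n-1)*γ*V^2 - ((γ-2)*(lam-1) + κ - (n-1)*γ)*V + (2*(lam-1) - κ) = 0 := by
    intro V hq
    have h4 : (4*((n-1)*γ)) *
        ((n-1)*γ*V^2 - ((γ-2)*(lam-1) + κ - (n-1)*γ)*V + (2*(lam-1) - κ)) = 0 := by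
      rcases hq with hq | hq
      · linear_combination (2*(n-1)*γ*V - ((γ-2)*(lam-1) + κ - (n-1)*γ)
          + Real.sqrt (DeltaP n γ lam κ)) * hq + hs
      · linear_combination (2*(n-1)*γ*V - ((γ-2)*(lam-1) + κ - (n-1)*γ)
          - Real.sqrt (DeltaP n γ lam κ)) * hq + hs
    have h40 : (4*((n-1)*γ)) ≠ 0 := by
      simp [hm, hg]
    exact (mul_eq_zero.mp h4).resolve_left h40
  constructor
  · apply key
    apply quad
    left
    unfold Vplus
    field_simp
  · apply key
    apply quad
    right
    unfold Vminus
    field_simp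
end
end

section
/- Assume Δ ≥ 0 and let V be either of the two values V_+ or V_-. Then V(1+V)(λ+V) = n(V - V_*)(1+V)²; consequently, if V ≠ -1 then G(V, 1+V) = 0 and F(V, 1+V) = 0, i.e. the critical points determined by V_± lie on the critical line C = 1+V and are common zeros of F and G. -/
/-!
By construction `V_±` are the roots of the quadratic `mγV² - ((γ-2)μ + κ - mγ)V + (2μ - κ)`,
whose discriminant is `Δ`. On the critical line `C = 1 + V`, both `γ G` and `F` are multiples of
`(1 + V)` times this quadratic, so they vanish at `V_±`.
-/

noncomputable section

def criticalQuadratic (n γ lam κ V : ℝ) : ℝ :=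
  (n - 1)*γ * (V*V) - ((γ-2)*(lam-1) + κ - (n-1)*γ) * V + (2*(lam - 1) - κ)

theorem discrim_criticalQuadratic (n γ lam κ : ℝ) :
    discrim ((n - 1)*γ) (-((γ-2)*(lam-1) + κ - (n-1)*γ)) (2*(lam - 1) - κ) = DeltaP n γ lam κ := by
  rw [discrim, DeltaP]
  ring

theorem criticalQuadratic_eq_zero {n γ lam κ V : ℝ} (hn : n ≠ 1) (hγ : γ ≠ 0)
    (hΔ : 0 ≤ DeltaP n γ lam κ) (hV : V = Vplus n γ lam κ ∨ V = Vminus n γ lam κ) :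
    criticalQuadratic n γ lam κ V = 0 := by
  have ha : (n - 1)*γ ≠ 0 := mul_ne_zero (sub_ne_zero.mpr hn) hγ
  have hs : discrim ((n - 1)*γ) (-((γ-2)*(lam-1) + κ - (n-1)*γ)) (2*(lam - 1) - κ) =
      √(DeltaP n γ lam κ) * √(DeltaP n γ lam κ) := by
    rw [discrim_criticalQuadratic, Real.mul_self_sqrt hΔ]
  rw [criticalQuadratic, sub_eq_add_neg, ← neg_mul, quadratic_eq_zero_iff ha hs, neg_neg]
  rcases hV with rfl | rfl
  · left; rw [Vplus]; field_simp
  · right; rw [Vminus]; field_simp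

/-- Since `nγ(V - V_*) = nγV + 2μ - κ`, the difference of the two sides factors through the
quadratic. -/
theorem mul_sub_eq_neg_mul_criticalQuadratic {n γ lam κ : ℝ} (hn : n ≠ 0) (hγ : γ ≠ 0) (V : ℝ) :
    γ * (V*(1+V)*(lam+V) - n*(V - Vstar n γ lam κ)*(1+V)^2) =
      -(1 + V) * criticalQuadratic n γ lam κ V := by
  rw [Vstar, criticalQuadratic]
  field_simp
  ring

theorem Ff_one_add_self {n γ lam κ V : ℝ} (hγ : γ ≠ 0) (hV : 1 + V ≠ 0) :
    Ff n γ lam κ V (1+V) = -(γ - 1) * (1 + V) * criticalQuadratic n γ lam κ V / (2*γ) := by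
  rw [Ff, alphaP, K1, K2, K3, criticalQuadratic]
  field_simp
  ring

/-- for `V = V_±` one has `V(1+V)(λ+V) = n(V-V_*)(1+V)²`; hence if `V ≠ -1`
then `(V, 1+V)` lies on the critical line `C = 1+V` and is a common zero of `F` and `G`. -/
theorem stmt_4 (n γ lam κ V : ℝ) (hn : n = 2 ∨ n = 3) (hγ : 1 < γ)
    (hΔ : 0 ≤ DeltaP n γ lam κ)
    (hV : V = Vplus n γ lam κ ∨ V = Vminus n γ lam κ) :
    V*(1+V)*(lam+V) = n*(V - Vstar n γ lam κ)*(1+V)^2 ∧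
    (V ≠ -1 → Gf n γ lam κ V (1+V) = 0 ∧ Ff n γ lam κ V (1+V) = 0) := by
  have hn0 : n ≠ 0 := by rcases hn with rfl | rfl <;> norm_num
  have hn1 : n ≠ 1 := by rcases hn with rfl | rfl <;> norm_num
  have hγ0 : γ ≠ 0 := (zero_lt_one.trans hγ).ne'
  have hQ := criticalQuadratic_eq_zero hn1 hγ0 hΔ hV
  have key : V*(1+V)*(lam+V) = n*(V - Vstar n γ lam κ)*(1+V)^2 := by
    have h := mul_sub_eq_neg_mul_criticalQuadratic (lam := lam) (κ := κ) hn0 hγ0 V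
    rw [hQ, mul_zero, mul_eq_zero, sub_eq_zero] at h
    exact h.resolve_left hγ0
  refine ⟨key, fun hV1 => ⟨?_, ?_⟩⟩
  · rw [Gf]
    linear_combination -key
  · have h1V : 1 + V ≠ 0 := fun h => hV1 (by linarith)
    rw [Ff_one_add_self hγ0 h1V, hQ, mul_zero, zero_div]
end
end

section
/- Assume n = 2 or n = 3, γ > 1, 0 < λ < 1, and κ = κ̂ = 2(1-λ)/(γ-1). Then the strict ordering V_- < -1 < -λ < V₄ < 0 < V_* < V_+ holds, where V₄ = -λ/(1 + (n/2)(γ-1)) and V_* = (κ̂ - 2(λ-1))/(nγ). -/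
noncomputable section

/-- The isentropic exponent `κ̂ = 2(1-λ)/(γ-1)`. -/
def khat (γ lam : ℝ) : ℝ := 2*(1 - lam)/(γ - 1)

/-- `a = ((γ-3)/(m(γ-1)))μ - 1`, with `m = n-1`, `μ = λ-1`. -/
def aIs (n γ lam : ℝ) : ℝ := ((γ - 3)/((n-1)*(γ - 1)))*(lam - 1) - 1

/-- `Q = ((γ-3)/(m(γ-1)))²μ² - 2((γ+1)/(m(γ-1)))μ + 1`. -/
def QIs (n γ lam : ℝ) : ℝ :=
  ((γ - 3)/((n-1)*(γ - 1)))^2*(lam - 1)^2 - 2*((γ + 1)/((n-1)*(γ - 1)))*(lam - 1) + 1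

/-- `V₊ = (a + √Q)/2` in the isentropic case `κ = κ̂`. -/
def VpIs (n γ lam : ℝ) : ℝ := (aIs n γ lam + Real.sqrt (QIs n γ lam))/2

/-- `V₋ = (a - √Q)/2` in the isentropic case `κ = κ̂`. -/
def VmIs (n γ lam : ℝ) : ℝ := (aIs n γ lam - Real.sqrt (QIs n γ lam))/2

lemma sqrt_gt_of_sq_lt {x Q : ℝ} (h : x^2 < Q) : x < Real.sqrt Q := by
  have hQ : 0 ≤ Q := le_of_lt (lt_of_le_of_lt (sq_nonneg x) h)
  nlinarith [Real.sq_sqrt hQ, Real.sqrt_nonneg Q]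

/-- for `n ∈ {2,3}`, `γ > 1`, `0 < λ < 1`, `κ = κ̂`, the strict ordering
`V₋ < -1 < -λ < V₄ < 0 < V_* < V₊` holds. -/
theorem stmt_11 (n γ lam : ℝ) (hn : n = 2 ∨ n = 3) (hγ : 1 < γ)
    (h0 : 0 < lam) (h1 : lam < 1) :
    VmIs n γ lam < -1 ∧ (-1:ℝ) < -lam ∧
    -lam < -lam/(1 + (n/2)*(γ - 1)) ∧
    -lam/(1 + (n/2)*(γ - 1)) < 0 ∧
    0 < Vstar n γ lam (khat γ lam) ∧
    Vstar n γ lam (khat γ lam) < VpIs n γ lam := by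
  have hn2 : (2:ℝ) ≤ n := by rcases hn with rfl | rfl <;> norm_num
  have hm : (0:ℝ) < n - 1 := by linarith
  have hg : (0:ℝ) < γ - 1 := by linarith
  have hg0 : γ ≠ 0 := by positivity
  have hg1 : γ - 1 ≠ 0 := ne_of_gt hg
  have hm0 : n - 1 ≠ 0 := ne_of_gt hm
  have hn0 : n ≠ 0 := by positivity
  have hD : (1:ℝ) < 1 + (n/2)*(γ - 1) := by nlinarith
  have hD0 : (0:ℝ) < 1 + (n/2)*(γ - 1) := by linarith
  refine ⟨?_, by linarith, ?_, ?_, ?_, ?_⟩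
  · -- V₋ < -1
    have key : (aIs n γ lam + 2)^2 < QIs n γ lam := by
      have : QIs n γ lam - (aIs n γ lam + 2)^2 = -4*(lam-1)/(n-1) := by
        unfold QIs aIs; field_simp; ring
      nlinarith [div_pos (by linarith : (0:ℝ) < -4*(lam-1)) hm]
    have := sqrt_gt_of_sq_lt key
    unfold VmIs; linarith
  · rw [lt_div_iff₀ hD0]; nlinarith
  · exact div_neg_of_neg_of_pos (by linarith) hD0
  · unfold Vstar khat
    apply div_pos
    · have : 0 < 2*(1 - lam)/(γ - 1) := div_pos (by linarith) hg
      linarith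
    · nlinarith
  · -- V_* < V₊
    have key : (2 * Vstar n γ lam (khat γ lam) - aIs n γ lam)^2 < QIs n γ lam := by
      have heq : QIs n γ lam - (2 * Vstar n γ lam (khat γ lam) - aIs n γ lam)^2
          = 8*(2*(lam-1)^2 - (lam-1)*lam*n*(γ-1))/(n^2*(n-1)*(γ-1)^2) := by
        unfold QIs Vstar khat aIs; field_simp; ring
      have hnum : 0 < 2*(lam-1)^2 - (lam-1)*lam*n*(γ-1) := by nlinarith [mul_pos (mul_pos (mul_pos (by linarith : (0:ℝ) < 1-lam) h0) (by linarith : (0:ℝ) < n)) hg, sq_nonneg (lam-1)]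
      have : 0 < 8*(2*(lam-1)^2 - (lam-1)*lam*n*(γ-1))/(n^2*(n-1)*(γ-1)^2) := by
        apply div_pos (by linarith); positivity
      linarith
    have := sqrt_gt_of_sq_lt key
    unfold VpIs; linarith
end
end

section
/- Let n ∈ {2,3}, γ > 1, λ > 0, and let κ be real with κ + n > 0 and λ < 1 + (κ+n)/2. Define α = (κ(γ-1)+2(λ-1))/(2γ), V_* = (κ-2(λ-1))/(nγ), q = (κ(γ-1)+2(λ-1))/(κ+n), and σ = (1/λ)(1 + α/(1+V_*)) (note that 1+V_* > 0 under these hypotheses). If α ≤ 0 and κ + 2λ(σ-1)/(1-γ+q) ≥ 0, then α = 0, i.e. κ must equal the isentropic value κ̂ = 2(1-λ)/(γ-1). -/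
noncomputable section

/- Writing `A = κ(γ-1) + 2(λ-1) = 2γα` and `D = nγ + κ - 2(λ-1) = nγ(1 + V_*)`, the quantity in the
hypothesis simplifies to `κ + 2λ(σ-1)/(1-γ+q) = nA/D`. The integrability constraints make `D > 0`,
so the hypothesis forces `A ≥ 0`, while `α ≤ 0` gives `A ≤ 0`. -/

theorem alphaP_div_one_add_Vstar {n γ lam κ : ℝ} (hn : n ≠ 0) (hγ : γ ≠ 0)
    (hD : n*γ + κ - 2*(lam - 1) ≠ 0) :
    alphaP γ lam κ / (1 + Vstar n γ lam κ)
      = n*(κ*(γ - 1) + 2*(lam - 1)) / (2*(n*γ + κ - 2*(lam - 1))) := by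
  have hV : 1 + Vstar n γ lam κ = (n*γ + κ - 2*(lam - 1)) / (n*γ) := by
    rw [Vstar]
    field_simp
    ring
  rw [hV, alphaP, div_div_div_eq, div_eq_div_iff (by positivity) (by positivity)]
  ring

theorem one_sub_add_div_eq {n γ lam κ : ℝ} (hκn : κ + n ≠ 0) :
    1 - γ + (κ*(γ - 1) + 2*(lam - 1))/(κ + n) = (2*(lam - 1) - n*(γ - 1))/(κ + n) := by
  field_simp
  ring

theorem rho_condition_eq {n γ lam κ : ℝ} (hn : n ≠ 0) (hγ : γ ≠ 0) (hlam : lam ≠ 0)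
    (hκn : κ + n ≠ 0) (hD : n*γ + κ - 2*(lam - 1) ≠ 0) (hE : 2*(lam - 1) - n*(γ - 1) ≠ 0) :
    κ + 2*lam*((1/lam)*(1 + alphaP γ lam κ/(1 + Vstar n γ lam κ)) - 1)
        /(1 - γ + (κ*(γ - 1) + 2*(lam - 1))/(κ + n))
      = n*(κ*(γ - 1) + 2*(lam - 1))/(n*γ + κ - 2*(lam - 1)) := by
  rw [alphaP_div_one_add_Vstar hn hγ hD, one_sub_add_div_eq hκn]
  field_simp
  ring

theorem alphaP_eq_zero_iff_eq_khat {γ lam κ : ℝ} (hγ : 1 < γ) :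
    alphaP γ lam κ = 0 ↔ κ = khat γ lam := by
  have hγ1 : γ - 1 ≠ 0 := sub_ne_zero.mpr hγ.ne'
  rw [alphaP, khat, div_eq_zero_iff, eq_div_iff hγ1]
  constructor
  · rintro (h | h) <;> linarith
  · intro h
    left
    linarith

/-- under the integrability constraints `κ + n > 0` and `λ < 1 + (κ+n)/2`,
if `α ≤ 0` and `κ + 2λ(σ-1)/(1-γ+q) ≥ 0`, where `q = (κ(γ-1)+2(λ-1))/(κ+n)` and
`σ = (1/λ)(1 + α/(1+V_*))`, then `α = 0`, i.e. `κ = κ̂ = 2(1-λ)/(γ-1)`. -/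
theorem stmt_12 (n γ lam κ : ℝ) (hn : n = 2 ∨ n = 3) (hγ : 1 < γ) (hlam : 0 < lam)
    (h1 : 0 < κ + n) (h2 : lam < 1 + (κ + n)/2)
    (hα : alphaP γ lam κ ≤ 0)
    (hρ : 0 ≤ κ + 2*lam*((1/lam)*(1 + alphaP γ lam κ/(1 + Vstar n γ lam κ)) - 1)
                  /(1 - γ + (κ*(γ - 1) + 2*(lam - 1))/(κ + n))) :
    alphaP γ lam κ = 0 ∧ κ = khat γ lam := by
  have hn0 : 0 < n := by rcases hn with rfl | rfl <;> norm_num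
  have hγ0 : 0 < γ := by linarith
  have hA : κ*(γ - 1) + 2*(lam - 1) ≤ 0 := by
    rw [alphaP, div_nonpos_iff] at hα
    rcases hα with ⟨-, h⟩ | ⟨h, -⟩ <;> linarith
  have hD : 0 < n*γ + κ - 2*(lam - 1) := by nlinarith
  have hE : 2*(lam - 1) - n*(γ - 1) < 0 := by nlinarith
  rw [rho_condition_eq hn0.ne' hγ0.ne' hlam.ne' h1.ne' hD.ne' hE.ne, le_div_iff₀ hD, zero_mul] at hρ
  have hA0 : κ*(γ - 1) + 2*(lam - 1) = 0 := le_antisymm hA (nonneg_of_mul_nonneg_right hρ hn0)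
  have hα0 : alphaP γ lam κ = 0 := by rw [alphaP, hA0, zero_div]
  exact ⟨hα0, (alphaP_eq_zero_iff_eq_khat hγ).mp hα0⟩
end
end

section
/- Assume κ = κ̂ and 0 < λ < 1, and let P₈ = (V₈, C₈) where V₈ = V_+ and C₈ = 1 + V₈ > 0. Then F(P₈) = G(P₈) = 0, and the partial derivatives of F and G at P₈ are given by: ∂F/∂C = 2C₈², ∂F/∂V = C₈(k₂ - 2k₁(1+V₈)), ∂G/∂C = 2nC₈(V₈ - V_*) = 2V₈(λ + V₈), and ∂G/∂V = C₈(n - λ + nV_* - 2V₈). In particular ∂F/∂C > 0 and ∂G/∂C > 0 at P₈. -/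
/-!
For `κ = κ̂` one has `α = 0` and `n(γ-1)V_* = -2μ`, so on the line `C = 1 + V` both brackets
`F/C` and `(γ-1)G/C` are multiples of the quadratic
`qIs V = m(γ-1)V² + (m(γ-1) - (γ-3)μ)V + 2μ`.
Dividing by `m(γ-1)` gives `V² - aV - 2(1-λ)/(m(γ-1))`, whose discriminant is
`Q = a² + 8(1-λ)/(m(γ-1))`, so `V₊` is a root of `qIs` and `P₈` is a common zero of `F` and `G`.
Since `Q > a²`, also `V₊ > 0`.
The partial derivatives are computed directly and simplified with the two reduced equations
`C₈² - k₁C₈² + k₂C₈ - k₃ = 0` and `nC₈(V₈ - V_*) = V₈(λ + V₈)`.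
-/

noncomputable section

/-- `F_C`: the partial derivative `∂F/∂C` at `P₈ = (V₊, 1+V₊)`, with `κ = κ̂`. -/
def FCd (n γ lam : ℝ) : ℝ :=
  deriv (fun C => Ff n γ lam (khat γ lam) (VpIs n γ lam) C) (1 + VpIs n γ lam)

/-- `F_V`: the partial derivative `∂F/∂V` at `P₈ = (V₊, 1+V₊)`, with `κ = κ̂`. -/
def FVd (n γ lam : ℝ) : ℝ :=
  deriv (fun V => Ff n γ lam (khat γ lam) V (1 + VpIs n γ lam)) (VpIs n γ lam)

/-- `G_C`: the partial derivative `∂G/∂C` at `P₈ = (V₊, 1+V₊)`, with `κ = κ̂`. -/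
def GCd (n γ lam : ℝ) : ℝ :=
  deriv (fun C => Gf n γ lam (khat γ lam) (VpIs n γ lam) C) (1 + VpIs n γ lam)

/-- `G_V`: the partial derivative `∂G/∂V` at `P₈ = (V₊, 1+V₊)`, with `κ = κ̂`. -/
def GVd (n γ lam : ℝ) : ℝ :=
  deriv (fun V => Gf n γ lam (khat γ lam) V (1 + VpIs n γ lam)) (VpIs n γ lam)

def qIs (n γ lam V : ℝ) : ℝ :=
  (n - 1)*(γ - 1)*V^2 + ((n - 1)*(γ - 1) - (γ - 3)*(lam - 1))*V + 2*(lam - 1)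

theorem alphaP_khat {γ : ℝ} (hγ : γ ≠ 1) (lam : ℝ) : alphaP γ lam (khat γ lam) = 0 := by
  have : γ - 1 ≠ 0 := sub_ne_zero.mpr hγ
  unfold alphaP khat
  field_simp
  ring

theorem mul_Vstar_khat {n γ : ℝ} (hn : n ≠ 0) (hγ₀ : γ ≠ 0) (hγ₁ : γ ≠ 1) (lam : ℝ) :
    n*(γ - 1)*Vstar n γ lam (khat γ lam) = -2*(lam - 1) := by
  have : γ - 1 ≠ 0 := sub_ne_zero.mpr hγ₁
  unfold Vstar khat
  field_simp
  ring

theorem QIs_eq_aIs_sq_add {n γ : ℝ} (hn : n ≠ 1) (hγ : γ ≠ 1) (lam : ℝ) :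
    QIs n γ lam = aIs n γ lam ^ 2 + 8*(1 - lam)/((n - 1)*(γ - 1)) := by
  have : n - 1 ≠ 0 := sub_ne_zero.mpr hn
  have : γ - 1 ≠ 0 := sub_ne_zero.mpr hγ
  unfold QIs aIs
  field_simp
  ring

theorem aIs_sq_lt_QIs {n γ lam : ℝ} (hn : 1 < n) (hγ : 1 < γ) (hlam : lam < 1) :
    aIs n γ lam ^ 2 < QIs n γ lam := by
  rw [QIs_eq_aIs_sq_add hn.ne' hγ.ne']
  have : 0 < 8*(1 - lam)/((n - 1)*(γ - 1)) :=
    div_pos (by linarith) (mul_pos (by linarith) (by linarith))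
  linarith

theorem qIs_VpIs {n γ lam : ℝ} (hn : n ≠ 1) (hγ : γ ≠ 1) (hQ : 0 ≤ QIs n γ lam) :
    qIs n γ lam (VpIs n γ lam) = 0 := by
  have hm : n - 1 ≠ 0 := sub_ne_zero.mpr hn
  have hγ' : γ - 1 ≠ 0 := sub_ne_zero.mpr hγ
  have hsq : √(QIs n γ lam) ^ 2 = aIs n γ lam ^ 2 + 8*(1 - lam)/((n - 1)*(γ - 1)) := by
    rw [Real.sq_sqrt hQ, QIs_eq_aIs_sq_add hn hγ]
  have ha : (n - 1)*(γ - 1)*aIs n γ lam = (γ - 3)*(lam - 1) - (n - 1)*(γ - 1) := by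
    unfold aIs
    field_simp
  have hd : (n - 1)*(γ - 1)*(8*(1 - lam)/((n - 1)*(γ - 1))) = 8*(1 - lam) := by
    field_simp
  unfold qIs VpIs
  linear_combination (n - 1)*(γ - 1)/4*hsq + (aIs n γ lam + √(QIs n γ lam))/2*ha + hd/4

theorem VpIs_pos {n γ lam : ℝ} (hn : 1 < n) (hγ : 1 < γ) (hlam : lam < 1) :
    0 < VpIs n γ lam := by
  have : |aIs n γ lam| < √(QIs n γ lam) := by
    rw [← Real.sqrt_sq_eq_abs]
    exact Real.sqrt_lt_sqrt (sq_nonneg _) (aIs_sq_lt_QIs hn hγ hlam)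
  unfold VpIs
  linarith [neg_abs_le (aIs n γ lam)]

theorem F_bracket_one_add (n γ lam V : ℝ) :
    (1 + V)^2 - K1 n γ*(1 + V)^2 + K2 n γ lam*(1 + V) - K3 γ lam = -qIs n γ lam V / 2 := by
  unfold K1 K2 K3 qIs
  ring

theorem G_bracket_one_add {n γ : ℝ} (hn : n ≠ 0) (hγ₀ : γ ≠ 0) (hγ₁ : γ ≠ 1) (lam V : ℝ) :
    (γ - 1)*(n*(1 + V)*(V - Vstar n γ lam (khat γ lam)) - V*(lam + V)) = qIs n γ lam V := by
  unfold qIs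
  linear_combination (-(1 + V))*mul_Vstar_khat hn hγ₀ hγ₁ lam

theorem hasDerivAt_Ff_C (n γ lam κ V C : ℝ) :
    HasDerivAt (fun C => Ff n γ lam κ V C)
      (3*C^2*(1 + alphaP γ lam κ/(1 + V))
        - (K1 n γ*(1 + V)^2 - K2 n γ lam*(1 + V) + K3 γ lam)) C := by
  unfold Ff
  exact ((hasDerivAt_id' C).mul
    ((((hasDerivAt_pow 2 C).mul_const (1 + alphaP γ lam κ/(1 + V))).sub_const
    (K1 n γ*(1 + V)^2)).add_const (K2 n γ lam*(1 + V)) |>.sub_const (K3 γ lam))).congr_deriv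
    (by push_cast; ring)

theorem hasDerivAt_Ff_V (n γ lam κ : ℝ) {V : ℝ} (hV : 1 + V ≠ 0) (C : ℝ) :
    HasDerivAt (fun V => Ff n γ lam κ V C)
      (C*(-(C^2*alphaP γ lam κ/(1 + V)^2) - 2*K1 n γ*(1 + V) + K2 n γ lam)) V := by
  have h1V : HasDerivAt (fun V : ℝ => 1 + V) 1 V := (hasDerivAt_id' V).const_add 1
  have hα := ((hasDerivAt_const V (alphaP γ lam κ)).div h1V hV).const_add 1 |>.const_mul (C^2)
  unfold Ff
  exact ((((hα.sub ((h1V.pow 2).const_mul (K1 n γ))).add (h1V.const_mul (K2 n γ lam))).sub_const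
    (K3 γ lam)).const_mul C).congr_deriv (by push_cast; ring)

theorem hasDerivAt_Gf_C (n γ lam κ V C : ℝ) :
    HasDerivAt (fun C => Gf n γ lam κ V C) (2*n*C*(V - Vstar n γ lam κ)) C := by
  unfold Gf
  exact ((((hasDerivAt_pow 2 C).const_mul n).mul_const (V - Vstar n γ lam κ)).sub_const
    (V*(1 + V)*(lam + V))).congr_deriv (by push_cast; ring)

theorem hasDerivAt_Gf_V (n γ lam κ V C : ℝ) :
    HasDerivAt (fun V => Gf n γ lam κ V C)
      (n*C^2 - ((1 + V)*(lam + V) + V*(lam + V) + V*(1 + V))) V := by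
  have hV := hasDerivAt_id' V
  unfold Gf
  exact (((hV.sub_const (Vstar n γ lam κ)).const_mul (n*C^2)).sub
    ((hV.mul (hV.const_add 1)).mul (hV.const_add lam))).congr_deriv
    (by simp only [Pi.mul_apply]; ring)

/-- with `κ = κ̂` and `0 < λ < 1`, at `P₈ = (V₈, C₈) = (V₊, 1+V₊)` one has
`F(P₈) = G(P₈) = 0`, `F_C = 2C₈²`, `F_V = C₈(k₂ - 2k₁(1+V₈))`,
`G_C = 2nC₈(V₈ - V_*) = 2V₈(λ+V₈)`, `G_V = C₈(n - λ + nV_* - 2V₈)`;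
in particular `F_C > 0` and `G_C > 0`. -/
theorem stmt_13 (n γ lam : ℝ) (hn : n = 2 ∨ n = 3) (hγ : 1 < γ)
    (h0 : 0 < lam) (h1 : lam < 1) :
    let κ := khat γ lam
    let V8 := VpIs n γ lam
    let C8 := 1 + V8
    Ff n γ lam κ V8 C8 = 0 ∧ Gf n γ lam κ V8 C8 = 0 ∧
    FCd n γ lam = 2*C8^2 ∧
    FVd n γ lam = C8*(K2 n γ lam - 2*K1 n γ*(1+V8)) ∧
    GCd n γ lam = 2*n*C8*(V8 - Vstar n γ lam κ) ∧
    GCd n γ lam = 2*V8*(lam + V8) ∧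
    GVd n γ lam = C8*(n - lam + n*Vstar n γ lam κ - 2*V8) ∧
    0 < FCd n γ lam ∧ 0 < GCd n γ lam := by
  intro κ V8 C8
  have hn1 : 1 < n := by rcases hn with rfl | rfl <;> norm_num
  have hα : alphaP γ lam κ = 0 := alphaP_khat hγ.ne' lam
  have hV8 : 0 < V8 := VpIs_pos hn1 hγ h1
  have hC8 : 0 < C8 := add_pos one_pos hV8
  have hq : qIs n γ lam V8 = 0 :=
    qIs_VpIs hn1.ne' hγ.ne' ((sq_nonneg _).trans (aIs_sq_lt_QIs hn1 hγ h1).le)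
  have hF : C8^2 - K1 n γ*C8^2 + K2 n γ lam*C8 - K3 γ lam = 0 := by
    rw [F_bracket_one_add, hq, neg_zero, zero_div]
  have hG : n*C8*(V8 - Vstar n γ lam κ) - V8*(lam + V8) = 0 := by
    have h := G_bracket_one_add (by linarith : n ≠ 0) (by linarith : γ ≠ 0) hγ.ne' lam V8
    rw [hq] at h
    exact (mul_eq_zero.mp h).resolve_left (sub_ne_zero.mpr hγ.ne')
  have hFC : FCd n γ lam = 2*C8^2 := by
    rw [FCd, (hasDerivAt_Ff_C ..).deriv, hα]
    linear_combination hF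
  have hGC : GCd n γ lam = 2*n*C8*(V8 - Vstar n γ lam κ) := (hasDerivAt_Gf_C ..).deriv
  have hGC' : GCd n γ lam = 2*V8*(lam + V8) := by
    rw [hGC]
    linear_combination 2*hG
  refine ⟨?_, ?_, hFC, ?_, hGC, hGC', ?_, ?_, ?_⟩
  · simp only [Ff, hα]
    linear_combination C8*hF
  · simp only [Gf]
    linear_combination C8*hG
  · rw [FVd, (hasDerivAt_Ff_V _ _ _ _ hC8.ne' _).deriv, hα]
    ring
  · rw [GVd, (hasDerivAt_Gf_V ..).deriv]
    linear_combination hG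
  · rw [hFC]
    positivity
  · rw [hGC']
    exact mul_pos (by positivity) (by linarith)
end
end
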